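/- arXiv:1302.6150 — 3 statements merged into one kernel-verified Lean document; each statement's English description precedes it below -/
import Mathlib

section
/- Fix k and f, and let I^f be the set of involutions of Fin k with exactly f fixed points. For every permutation w of Fin k, the following character identity holds in ℤ: Σ_{t ∈ I^f, w·t·w⁻¹ = t} S(w,t) = sign(w) · Σ_{t ∈ I^f, w·t·w⁻¹ = t} s(w,t). (Equivalently, the Saxl model representation on ℂ-span of I^f is isomorphic to the Adin–Postnikov–Roichman model representation tensored with the sign representation.) -/
open Finset

/-- The Saxl sign `S(w,t)`: `(-1)` raised to the number of pairs `i < j` with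
`t i = i`, `t j = j` and `w i > w j`. -/
def saxlSign {k : ℕ} (w t : Equiv.Perm (Fin k)) : ℤ :=
  (-1) ^ (Finset.univ.filter (fun p : Fin k × Fin k =>
      p.1 < p.2 ∧ t p.1 = p.1 ∧ t p.2 = p.2 ∧ w p.2 < w p.1)).card

/-- The Adin–Postnikov–Roichman sign `s(w,t)`: `(-1)` raised to the number of
pairs `i < j` with `t i = j`, `t j = i` and `w i > w j`. -/
def aprSign {k : ℕ} (w t : Equiv.Perm (Fin k)) : ℤ :=
  (-1) ^ (Finset.univ.filter (fun p : Fin k × Fin k =>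
      p.1 < p.2 ∧ t p.1 = p.2 ∧ t p.2 = p.1 ∧ w p.2 < w p.1)).card

/-- The set `I^f` of involutions of `Fin k` with exactly `f` fixed points. -/
def invf (k f : ℕ) : Finset (Equiv.Perm (Fin k)) :=
  Finset.univ.filter fun t =>
    t ^ 2 = 1 ∧ (Finset.univ.filter fun i => t i = i).card = f

/-!
For an involution `t` commuting with `w` the identity holds term by term,
`S(w,t) = sign(w) s(w,t)`: the inversions of `w` in pairs `{i, j}` not fixed by `t` are even
in number. The descent indicator `d_σ(p)` (does `σ` reverse the pair `p`?) satisfies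
`d_w(p) + d_w(t p) = d_t(p) + d_t(w p)` because `w t = t w`, and `d_t` is constant on
`t`-orbits. So mod 2 the inversions of `w` in an orbit `o = {p, t p}` number
`d_t(o) + d_t(w o)`; as `w` permutes these orbits, the total is `2 ∑ₒ d_t(o) = 0`.
-/

/-- `r` picks one point of each `T`-orbit of size two. -/
theorem Finset.sum_filter_ne_eq_zero_of_add_eq_add {ι R : Type*} [CommRing R] [CharP R 2]
    [DecidableEq ι] {s : Finset ι} {T W : ι → ι} {r φ f : ι → R}
    (hTs : ∀ p ∈ s, T p ∈ s) (hTT : ∀ p ∈ s, T (T p) = p)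
    (hW : Set.BijOn W s s) (hWT : ∀ p ∈ s, W (T p) = T (W p))
    (hr : ∀ p ∈ s, T p ≠ p → r p + r (T p) = 1) (hφ : ∀ p ∈ s, φ (T p) = φ p)
    (hf : ∀ p ∈ s, f p + f (T p) = φ p + φ (W p)) :
    ∑ p ∈ s with T p ≠ p, f p = 0 := by
  set N := s.filter (fun p => T p ≠ p)
  have hN {p} : p ∈ N ↔ p ∈ s ∧ T p ≠ p := mem_filter
  have hTN : ∀ p ∈ N, T p ∈ N := fun p hp => by
    rw [hN] at hp ⊢
    exact ⟨hTs p hp.1, fun h => hp.2 (h.symm.trans (hTT p hp.1))⟩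
  have hWN : Set.BijOn W N N := by
    refine ⟨fun p hp => ?_, hW.injOn.mono fun p hp => (hN.1 hp).1, fun q hq => ?_⟩
    · rw [Finset.mem_coe, hN] at hp ⊢
      refine ⟨hW.mapsTo hp.1, fun h => hp.2 (hW.injOn (hTs p hp.1) hp.1 ?_)⟩
      rw [hWT p hp.1, h]
    · rw [Finset.mem_coe, hN] at hq
      obtain ⟨p, hp, rfl⟩ := hW.surjOn hq.1
      refine ⟨p, ?_, rfl⟩
      rw [Finset.mem_coe, hN]
      exact ⟨hp, fun h => hq.2 (by rw [← hWT p hp, h])⟩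
  have hrT : ∀ p ∈ N, r (T p) = r p + 1 := fun p hp => by
    rw [← hr p (hN.1 hp).1 (hN.1 hp).2, ← add_assoc, CharTwo.add_self_eq_zero, zero_add]
  calc ∑ p ∈ N, f p
      = ∑ p ∈ N, (f p * r p + f p * r (T p)) := by
        refine sum_congr rfl fun p hp => ?_
        rw [← mul_add, hr p (hN.1 hp).1 (hN.1 hp).2, mul_one]
    _ = ∑ p ∈ N, (f p + f (T p)) * r p := by
        simp only [add_mul, sum_add_distrib]
        congr 1
        exact sum_nbij' T T hTN hTN (fun p hp => hTT p (hN.1 hp).1)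
          (fun p hp => hTT p (hN.1 hp).1) fun p hp => by rw [hTT p (hN.1 hp).1]
    _ = ∑ p ∈ N, φ p * r p + ∑ p ∈ N, φ (W p) * r p := by
        rw [← sum_add_distrib]
        exact sum_congr rfl fun p hp => by rw [hf p (hN.1 hp).1, add_mul]
    _ = ∑ p ∈ N, φ (W p) * (r (W p) + r p) := by
        rw [← sum_nbij W hWN.mapsTo hWN.injOn hWN.surjOn (fun _ _ => rfl), ← sum_add_distrib]
        exact sum_congr rfl fun p _ => by ring
    _ = 0 := by
        refine sum_involution (fun p _ => T p) (fun p hp => ?_) (fun p hp _ => (hN.1 hp).2)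
          hTN (fun p hp => hTT p (hN.1 hp).1)
        rw [hWT p (hN.1 hp).1, hφ _ (hW.mapsTo (hN.1 hp).1), hrT _ (hWN.mapsTo hp), hrT p hp]
        linear_combination (φ (W p) * (r (W p) + r p + 1)) * CharTwo.add_self_eq_zero (1 : R)

namespace Equiv.Perm

lemma sign_eq_signAux {n : ℕ} (w : Perm (Fin n)) : sign w = signAux w := by
  induction w using swap_induction_on with
  | one => simp [signAux_one]
  | swap_mul f x y hxy ih => rw [sign_mul, signAux_mul, sign_swap hxy, signAux_swap hxy, ih]

lemma sign_eq_neg_one_pow_card_inversions {n : ℕ} (w : Perm (Fin n)) :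
    (sign w : ℤ) = (-1) ^ #{p : Fin n × Fin n | p.1 < p.2 ∧ w p.2 < w p.1} := by
  rw [sign_eq_signAux, signAux, prod_ite, prod_const, prod_const_one, mul_one]
  push_cast
  congr 1
  refine card_nbij' (fun x : (_ : Fin n) × Fin n => (x.2, x.1))
    (fun p : Fin n × Fin n => ⟨p.2, p.1⟩) (fun x hx => ?_) (fun p hp => ?_)
    (fun _ _ => rfl) (fun _ _ => rfl)
  · simp only [coe_filter, mem_finPairsLT, Set.mem_ofPred_eq, mem_univ, true_and] at hx ⊢
    exact ⟨hx.1, hx.2.lt_of_ne (w.injective.ne hx.1.ne')⟩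
  · simp only [coe_filter, mem_finPairsLT, Set.mem_ofPred_eq, mem_univ, true_and] at hp ⊢
    exact ⟨hp.1, hp.2.le⟩

variable {α : Type*} [LinearOrder α]

def descent (σ : Perm α) (p : α × α) : ZMod 2 := if σ p.2 < σ p.1 then 1 else 0

/-- The action of `σ` on pairs `p.1 < p.2`, i.e. on two-element subsets. -/
def pairAct (σ : Perm α) (p : α × α) : α × α :=
  if σ p.1 < σ p.2 then (σ p.1, σ p.2) else (σ p.2, σ p.1)

variable {p : α × α}

lemma pairAct_lt (σ : Perm α) (hp : p.1 < p.2) : (pairAct σ p).1 < (pairAct σ p).2 := by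
  unfold pairAct
  split_ifs with h
  · exact h
  · exact lt_of_le_of_ne (not_lt.1 h) (σ.injective.ne hp.ne')

lemma pairAct_one (hp : p.1 < p.2) : pairAct 1 p = p := by
  simp [pairAct, hp]

lemma pairAct_mul (σ τ : Perm α) (hp : p.1 < p.2) :
    pairAct (σ * τ) p = pairAct σ (pairAct τ p) := by
  rcases lt_or_gt_of_ne (τ.injective.ne hp.ne) with h | h <;>
  rcases lt_or_gt_of_ne (σ.injective.ne (τ.injective.ne hp.ne)) with h' | h' <;>
  simp [pairAct, h, h.not_gt, h', h'.not_gt]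

lemma bijOn_pairAct (σ : Perm α) :
    Set.BijOn (pairAct σ) {p : α × α | p.1 < p.2} {p : α × α | p.1 < p.2} := by
  refine Set.InvOn.bijOn ⟨fun p hp => ?_, fun p hp => ?_⟩ (fun p => pairAct_lt σ)
    (fun p => pairAct_lt σ⁻¹)
  · rw [Set.mem_ofPred_eq] at hp
    rw [← pairAct_mul _ _ hp, inv_mul_cancel, pairAct_one hp]
  · rw [← pairAct_mul _ _ hp, mul_inv_cancel, pairAct_one hp]

lemma pairAct_eq_self_iff {σ : Perm α} (hp : p.1 < p.2) :
    pairAct σ p = p ↔ σ p.1 = p.1 ∧ σ p.2 = p.2 ∨ σ p.1 = p.2 ∧ σ p.2 = p.1 := by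
  obtain ⟨a, b⟩ := p
  simp only [pairAct, Prod.ext_iff] at hp ⊢
  split_ifs with h
  · refine ⟨Or.inl, ?_⟩
    rintro (h' | ⟨h1, h2⟩)
    · exact h'
    · rw [h1, h2] at h; exact absurd hp h.not_gt
  · refine ⟨fun h' => Or.inr h'.symm, ?_⟩
    rintro (⟨h1, h2⟩ | h')
    · rw [h1, h2] at h; exact absurd hp h
    · exact h'.symm

lemma descent_pairAct (σ τ : Perm α) (hp : p.1 < p.2) :
    descent σ (pairAct τ p) = descent (σ * τ) p + descent τ p := by
  rcases lt_or_gt_of_ne (τ.injective.ne hp.ne) with h | h <;>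
  rcases lt_or_gt_of_ne (σ.injective.ne (τ.injective.ne hp.ne)) with h' | h' <;>
  (simp [descent, pairAct, h, h.not_gt, h', h'.not_gt]; try decide)

lemma descent_one (hp : p.1 < p.2) : descent 1 p = 0 := by
  simp [descent, hp.not_gt]

variable {t w : Perm α}

lemma pairAct_pairAct_of_mul_self (ht : t * t = 1) (hp : p.1 < p.2) :
    pairAct t (pairAct t p) = p := by
  rw [← pairAct_mul _ _ hp, ht, pairAct_one hp]

lemma pairAct_comm_of_commute (hwt : w * t = t * w) (hp : p.1 < p.2) :
    pairAct w (pairAct t p) = pairAct t (pairAct w p) := by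
  rw [← pairAct_mul _ _ hp, ← pairAct_mul _ _ hp, hwt]

lemma descent_pairAct_self (ht : t * t = 1) (hp : p.1 < p.2) :
    descent t (pairAct t p) = descent t p := by
  rw [descent_pairAct _ _ hp, ht, descent_one hp, zero_add]

lemma descent_add_descent_pairAct (hwt : w * t = t * w) (hp : p.1 < p.2) :
    descent w p + descent w (pairAct t p) = descent t p + descent t (pairAct w p) := by
  rw [descent_pairAct _ _ hp, descent_pairAct _ _ hp, hwt]
  ring

variable [Fintype α]

lemma sum_descent_filter_pairAct_ne_self (ht : t * t = 1) (hwt : w * t = t * w) :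
    ∑ p ∈ ({p | p.1 < p.2} : Finset (α × α)) with pairAct t p ≠ p, descent w p = 0 := by
  have hD {p : α × α} : p ∈ ({p | p.1 < p.2} : Finset (α × α)) ↔ p.1 < p.2 := by simp
  refine sum_filter_ne_eq_zero_of_add_eq_add (T := pairAct t) (W := pairAct w)
    (r := fun p => if toLex p < toLex (pairAct t p) then 1 else 0)
    (fun p hp => hD.2 (pairAct_lt t (hD.1 hp)))
    (fun p hp => pairAct_pairAct_of_mul_self ht (hD.1 hp))
    (by simpa using bijOn_pairAct w) (fun p hp => pairAct_comm_of_commute hwt (hD.1 hp))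
    (fun p hp hne => ?_) (fun p hp => descent_pairAct_self ht (hD.1 hp))
    (fun p hp => descent_add_descent_pairAct hwt (hD.1 hp))
  simp only [pairAct_pairAct_of_mul_self ht (hD.1 hp)]
  rcases lt_or_gt_of_ne (toLex_inj.not.2 hne.symm) with h | h <;> simp [h, h.not_gt]

lemma natCast_card_filter_pairAct_eq_self :
    (#{p : α × α | p.1 < p.2 ∧ pairAct t p = p ∧ w p.2 < w p.1} : ZMod 2) =
      #{p : α × α | p.1 < p.2 ∧ t p.1 = p.1 ∧ t p.2 = p.2 ∧ w p.2 < w p.1} +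
      #{p : α × α | p.1 < p.2 ∧ t p.1 = p.2 ∧ t p.2 = p.1 ∧ w p.2 < w p.1} := by
  rw [← Nat.cast_add, ← card_union_of_disjoint]
  · congr 2
    ext p
    simp only [mem_filter, mem_union, mem_univ, true_and]
    constructor
    · rintro ⟨hp, hfix, hw⟩
      rcases (pairAct_eq_self_iff hp).1 hfix with h | h
      · exact Or.inl ⟨hp, h.1, h.2, hw⟩
      · exact Or.inr ⟨hp, h.1, h.2, hw⟩
    · rintro (⟨hp, h1, h2, hw⟩ | ⟨hp, h1, h2, hw⟩)
      · exact ⟨hp, (pairAct_eq_self_iff hp).2 (Or.inl ⟨h1, h2⟩), hw⟩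
      · exact ⟨hp, (pairAct_eq_self_iff hp).2 (Or.inr ⟨h1, h2⟩), hw⟩
  · refine disjoint_filter.2 fun p _ h h' => h.1.ne ?_
    rw [← h.2.1, h'.2.1]

theorem natCast_card_inversions_eq_of_commute (ht : t * t = 1) (hwt : w * t = t * w) :
    (#{p : α × α | p.1 < p.2 ∧ w p.2 < w p.1} : ZMod 2) =
      #{p : α × α | p.1 < p.2 ∧ t p.1 = p.1 ∧ t p.2 = p.2 ∧ w p.2 < w p.1} +
      #{p : α × α | p.1 < p.2 ∧ t p.1 = p.2 ∧ t p.2 = p.1 ∧ w p.2 < w p.1} := by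
  calc (#{p : α × α | p.1 < p.2 ∧ w p.2 < w p.1} : ZMod 2)
      = ∑ p ∈ ({p | p.1 < p.2} : Finset (α × α)), descent w p := by
        rw [← filter_filter, natCast_card_filter]
        rfl
    _ = ∑ p ∈ ({p | p.1 < p.2} : Finset (α × α)) with pairAct t p = p, descent w p := by
        rw [← sum_filter_add_sum_filter_not _ (fun p => pairAct t p = p),
          sum_descent_filter_pairAct_ne_self ht hwt, add_zero]
    _ = _ := by
        rw [← natCast_card_filter_pairAct_eq_self]
        simp only [descent, ← natCast_card_filter, filter_filter, and_assoc]

end Equiv.Perm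

lemma saxlSign_eq_sign_mul_aprSign {k : ℕ} {w t : Equiv.Perm (Fin k)} (ht : t * t = 1)
    (hwt : w * t = t * w) : saxlSign w t = Equiv.Perm.sign w * aprSign w t := by
  rw [saxlSign, aprSign, Equiv.Perm.sign_eq_neg_one_pow_card_inversions, ← pow_add]
  apply neg_one_pow_congr
  rw [← ZMod.natCast_eq_zero_iff_even, ← ZMod.natCast_eq_zero_iff_even, Nat.cast_add,
    Equiv.Perm.natCast_card_inversions_eq_of_commute ht hwt, add_assoc,
    CharTwo.add_self_eq_zero, add_zero]

/-- The character of the Saxl model on `I^f` equals the sign of `w` times the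
character of the Adin–Postnikov–Roichman model on `I^f`. -/
theorem saxl_character_eq_sign_mul_apr_character (k f : ℕ)
    (w : Equiv.Perm (Fin k)) :
    ∑ t ∈ (invf k f).filter (fun t => w * t * w⁻¹ = t), saxlSign w t
      = (Equiv.Perm.sign w : ℤ) *
        ∑ t ∈ (invf k f).filter (fun t => w * t * w⁻¹ = t), aprSign w t := by
  rw [mul_sum]
  refine sum_congr rfl fun t ht => ?_
  simp only [invf, mem_filter, mem_univ, true_and] at ht
  exact saxlSign_eq_sign_mul_aprSign (by rw [← sq, ht.1.1]) (mul_inv_eq_iff_eq_mul.1 ht.2)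
end

section
/- Let s_i denote the number of involutions of Fin i (permutations σ with σ² = 1), and let r_k = Σ_{i=0}^{k} C(k, i)·s_i (the number of self-inverse partial permutations of k points, i.e. of vertically symmetric rook monoid diagrams on k vertices). Then, as formal power series over ℚ, exp(X²/2 + 2X) = Σ_{k≥0} r_k · X^k/k!, where exp denotes the formal exponential (substitution of the power series X²/2 + 2X, which has zero constant term, into the formal exponential series Σ_n X^n/n!). -/
open Finset PowerSeries

/-- The formal substitution of a power series `g` (intended to have zero constant
term) into the formal exponential series `Σ_n Xⁿ/n!` : the `n`-th coefficient is
`Σ_{m=0}^{n} (coeff n of gᵐ)/m!`, which is the full substitution since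
`coeff n (gᵐ) = 0` for `m > n` when `g` has zero constant term. -/
noncomputable def expComp (g : PowerSeries ℚ) : PowerSeries ℚ :=
  PowerSeries.mk fun n =>
    ∑ m ∈ Finset.range (n + 1), (PowerSeries.coeff n (g ^ m)) / (m.factorial : ℚ)

/-- `s_i`, the number of involutions of `Fin i`. -/
def involutionCount (i : ℕ) : ℕ :=
  (Finset.univ.filter fun σ : Equiv.Perm (Fin i) => σ ^ 2 = 1).card

/-- `r_k = Σ_{i=0}^{k} C(k,i)·s_i`, the number of self-inverse partial
permutations of `k` points. -/
def rookModelDim (k : ℕ) : ℕ :=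
  ∑ i ∈ Finset.range (k + 1), Nat.choose k i * involutionCount i

/-! Counting involutions `σ` of a finite set by the value `σ x` gives
`s (n + 2) = s (n + 1) + (n + 1) s n`: those fixing `x` are the involutions of the remaining
points, and composing with the transposition `(x y)` turns those with `σ x = y` into the
involutions fixing `x` and `y`. Hence `S = Σ sₙ Xⁿ/n!` satisfies `S' = (X + 1) S`, so
`R = Σ rₖ Xᵏ/k! = eˣ S` satisfies `R' = (X + 2) R`. By the chain rule `exp (X²/2 + 2X)`
solves the same linear differential equation with the same constant term `1`, and such a
solution is unique. -/

namespace Equiv.Perm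

variable {α β : Type*} [DecidableEq α] [DecidableEq β]

theorem sq_swap_mul_eq_one {σ : Perm α} {x y : α} (hσ : σ ^ 2 = 1)
    (h : swap (σ x) (σ y) = swap x y) : (swap x y * σ) ^ 2 = 1 := by
  rw [swap_apply_apply, mul_inv_eq_iff_eq_mul] at h
  rw [Commute.mul_pow h.symm 2, hσ, sq, swap_mul_self, one_mul]

variable [Fintype α] [Fintype β]

theorem card_involutions_congr (e : α ≃ β) :
    #{σ : Perm α | σ ^ 2 = 1} = #{τ : Perm β | τ ^ 2 = 1} :=
  card_equiv e.permCongrHom.toEquiv fun σ => by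
    simp only [mem_filter, mem_univ, true_and, MulEquiv.toEquiv_eq_coe,
      MulEquiv.coe_toEquiv, ← map_pow, MulEquiv.map_eq_one_iff]

theorem card_involutions_fixing (s : Finset α) :
    #{σ : Perm α | σ ^ 2 = 1 ∧ ∀ a ∈ s, σ a = a} =
      involutionCount (Fintype.card α - #s) := by
  have hcard : Fintype.card {a // a ∉ s} = Fintype.card α - #s := by
    simp [Fintype.card_subtype_compl]
  rw [involutionCount, ← card_involutions_congr (Fintype.equivFinOfCardEq hcard)]
  symm
  refine card_bij (fun τ _ => ofSubtype τ) ?_ (fun _ _ _ _ h => ofSubtype_injective h) ?_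
  · intro τ hτ
    simp only [mem_filter, mem_univ, true_and] at hτ ⊢
    exact ⟨by rw [← map_pow, hτ, map_one],
      fun a ha => ofSubtype_apply_of_not_mem τ (not_not.2 ha)⟩
  · intro σ hσ
    simp only [mem_filter, mem_univ, true_and] at hσ
    have hτ := congrArg Subtype.val ((Perm.subtypeEquivSubtypePerm (· ∉ s)).apply_symm_apply
      ⟨σ, fun a ha => hσ.2 a (not_not.1 ha)⟩)
    refine ⟨_, ?_, hτ⟩
    simp only [mem_filter, mem_univ, true_and]
    apply ofSubtype_injective
    simp only [Perm.subtypeEquivSubtypePerm_apply_coe] at hτ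
    rw [map_pow, hτ, hσ.1, map_one]

theorem card_involutions_apply_eq_of_ne {x y : α} (hxy : x ≠ y) :
    #{σ : Perm α | σ ^ 2 = 1 ∧ σ x = y} = involutionCount (Fintype.card α - 2) := by
  have hfix := card_involutions_fixing {x, y}
  rw [card_pair hxy] at hfix
  rw [← hfix]
  refine card_nbij' (swap x y * ·) (swap x y * ·) ?_ ?_ (fun σ _ => swap_mul_self_mul _ _ _)
    (fun σ _ => swap_mul_self_mul _ _ _)
  · intro σ hσ
    simp only [coe_filter, mem_univ, true_and, Set.mem_ofPred_eq] at hσ ⊢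
    obtain ⟨hsq, hσx⟩ := hσ
    have hyx : σ y = x := by rw [← hσx, ← Perm.mul_apply, ← sq, hsq, one_apply]
    refine ⟨sq_swap_mul_eq_one hsq (by rw [hσx, hyx, swap_comm]), ?_⟩
    simp [hσx, hyx]
  · intro σ hσ
    simp only [coe_filter, mem_univ, true_and, Set.mem_ofPred_eq, mem_insert,
      mem_singleton, forall_eq_or_imp, forall_eq] at hσ ⊢
    obtain ⟨hsq, hx, hy⟩ := hσ
    exact ⟨sq_swap_mul_eq_one hsq (by simp [hx, hy]), by simp [hx]⟩

theorem card_involutions_eq (x : α) :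
    #{σ : Perm α | σ ^ 2 = 1} = involutionCount (Fintype.card α - 1) +
      (Fintype.card α - 1) * involutionCount (Fintype.card α - 2) := by
  rw [card_eq_sum_card_fiberwise (f := fun σ => σ x) (t := univ) (by simp),
    ← add_sum_erase _ _ (mem_univ x)]
  simp only [filter_filter]
  congr 1
  · simpa using card_involutions_fixing {x}
  · rw [sum_congr rfl fun y hy =>
        card_involutions_apply_eq_of_ne (ne_of_mem_erase hy).symm,
      sum_const, card_erase_of_mem (mem_univ x), card_univ, smul_eq_mul]

end Equiv.Perm

theorem involutionCount_add_two (n : ℕ) :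
    involutionCount (n + 2) = involutionCount (n + 1) + (n + 1) * involutionCount n := by
  have h := Equiv.Perm.card_involutions_eq (0 : Fin (n + 2))
  rwa [Fintype.card_fin, show n + 2 - 1 = n + 1 by omega, Nat.add_sub_cancel] at h

namespace PowerSeries

theorem eq_of_derivative_eq_mul {R : Type*} [Field R] [CharZero R] {f g h : R⟦X⟧}
    (hf : d⁄dX R f = h * f) (hg : d⁄dX R g = h * g) (hg0 : constantCoeff g ≠ 0)
    (hfg : constantCoeff f = constantCoeff g) : f = g := by
  have hinv : g⁻¹ * g = 1 := PowerSeries.inv_mul_cancel g hg0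
  have hquot : f * g⁻¹ = 1 := by
    apply derivative.ext
    · rw [Derivation.leibniz, derivative_inv', hf, hg, derivative_one, smul_eq_mul, smul_eq_mul]
      linear_combination (-(f * h * g⁻¹)) * hinv
    · simp [hfg, hg0]
  calc f = f * g⁻¹ * g := by rw [mul_assoc, hinv, mul_one]
    _ = g := by rw [hquot, one_mul]

end PowerSeries

theorem expComp_eq_subst_exp {g : ℚ⟦X⟧} (hg : constantCoeff g = 0) :
    expComp g = (exp ℚ).subst g := by
  ext n
  rw [expComp, coeff_mk, coeff_subst' (HasSubst.of_constantCoeff_zero' hg),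
    finsum_eq_sum_of_support_subset _ (s := range (n + 1))]
  · refine sum_congr rfl fun m _ => ?_
    simp [coeff_exp, div_eq_inv_mul]
  · intro m hm
    by_contra hmn
    have hX : X ^ m ∣ g ^ m := pow_dvd_pow_of_dvd (X_dvd_iff.2 hg) m
    exact hm (by simp only [X_pow_dvd_iff.1 hX n (by simpa using hmn), smul_zero])

theorem derivative_expComp {g : ℚ⟦X⟧} (hg : constantCoeff g = 0) :
    d⁄dX ℚ (expComp g) = d⁄dX ℚ g * expComp g := by
  rw [expComp_eq_subst_exp hg, derivative_subst (HasSubst.of_constantCoeff_zero' hg),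
    derivative_exp, mul_comm]

theorem constantCoeff_expComp (g : ℚ⟦X⟧) : constantCoeff (expComp g) = 1 := by
  rw [← coeff_zero_eq_constantCoeff_apply, expComp, coeff_mk]
  simp

theorem involutionCount_zero : involutionCount 0 = 1 := by decide

theorem involutionCount_one : involutionCount 1 = 1 := by decide

noncomputable def involutionEGF : ℚ⟦X⟧ :=
  mk fun n => (involutionCount n : ℚ) / n.factorial

theorem derivative_involutionEGF : d⁄dX ℚ involutionEGF = (X + 1) * involutionEGF := by
  ext n
  rw [coeff_derivative, add_mul, one_mul, map_add]
  cases n with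
  | zero =>
    simp [involutionEGF, involutionCount_zero, involutionCount_one]
  | succ n =>
    simp only [coeff_succ_X_mul, involutionEGF, coeff_mk, involutionCount_add_two,
      Nat.factorial_succ]
    push_cast
    field_simp
    ring

theorem exp_mul_involutionEGF :
    exp ℚ * involutionEGF = mk fun k => (rookModelDim k : ℚ) / k.factorial := by
  ext k
  rw [mul_comm, coeff_mul, Finset.Nat.sum_antidiagonal_eq_sum_range_succ
    (fun i j => coeff i involutionEGF * coeff j (exp ℚ)), coeff_mk, rookModelDim, Nat.cast_sum,
    sum_div]
  refine sum_congr rfl fun i hi => ?_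
  rw [involutionEGF, coeff_mk, coeff_exp, Nat.cast_mul,
    Nat.cast_choose ℚ (Nat.lt_succ_iff.1 (mem_range.1 hi))]
  simp only [eq_ratCast, Rat.cast_id]
  field_simp

theorem derivative_exp_mul_involutionEGF :
    d⁄dX ℚ (exp ℚ * involutionEGF) = (X + 2) * (exp ℚ * involutionEGF) := by
  rw [Derivation.leibniz, derivative_exp, derivative_involutionEGF, smul_eq_mul, smul_eq_mul]
  ring

/-- The exponential generating function identity
`exp(X²/2 + 2X) = Σ_{k≥0} r_k · X^k/k!`. -/
theorem symmetric_rook_egf :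
    PowerSeries.constantCoeff (R := ℚ)
        (PowerSeries.C (1 / 2) * PowerSeries.X ^ 2 + 2 * PowerSeries.X) = 0 ∧
    expComp (PowerSeries.C (1 / 2) * PowerSeries.X ^ 2 + 2 * PowerSeries.X)
      = PowerSeries.mk (fun k => (rookModelDim k : ℚ) / (k.factorial : ℚ)) := by
  have hg : constantCoeff (C (1 / 2) * X ^ 2 + 2 * X : ℚ⟦X⟧) = 0 := by simp
  have hdg : d⁄dX ℚ (C (1 / 2) * X ^ 2 + 2 * X : ℚ⟦X⟧) = X + 2 := by
    have h2 : d⁄dX ℚ (2 : ℚ⟦X⟧) = 0 := by exact_mod_cast (d⁄dX ℚ).map_natCast 2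
    have hhalf : C (1 / 2 : ℚ) * 2 = 1 := by rw [← map_ofNat C, ← map_mul]; norm_num
    simp only [map_add, Derivation.leibniz, derivative_C, derivative_X, derivative_pow, h2,
      smul_eq_mul]
    linear_combination X * hhalf
  refine ⟨hg, ?_⟩
  rw [← exp_mul_involutionEGF]
  refine PowerSeries.eq_of_derivative_eq_mul (h := X + 2) (by rw [derivative_expComp hg, hdg])
    derivative_exp_mul_involutionEGF ?_ ?_
  · simp [involutionEGF, involutionCount_zero]
  · simp [constantCoeff_expComp, involutionEGF, involutionCount_zero]
end

section
/- Fix k, r, ℓ ∈ ℕ with 2ℓ ≤ r ≤ k. The number of triples (P, Q, σ), where P is a finite partition (Finpartition) of the full set Fin k, Q is a subset of the set of parts of P with |Q| = r, and σ is an involution of Q (a bijection σ : Q → Q with σ² = id) having exactly ℓ two-element orbits, equals Σ_{b=r}^{k} S(k, b)·C(b, r)·C(r, 2ℓ)·(2ℓ−1)!!, where S(k, b) denotes the number of partitions of Fin k into exactly b parts (the Stirling number of the second kind). (Such triples are in bijection with the vertically symmetric partition-algebra diagrams on k vertices of rank r with r − 2ℓ fixed blocks.) -/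
/-!
Fixing `P` with `b` parts, the pairs `(Q, σ)` number `C(b, r)` times the number of involutions of
an `r`-set moving `2ℓ` points; grouping the partitions by their number of parts then produces the
Stirling numbers. An involution moving exactly `2ℓ` points is a permutation of cycle type `2^ℓ`,
so the class-size formula `n! / ((n - 2ℓ)! 2^ℓ ℓ!)` counts them, and
`(2ℓ)! = (2ℓ - 1)‼ 2^ℓ ℓ!` rewrites it as `C(n, 2ℓ) (2ℓ - 1)‼`.
-/

open Finset

/-- The Stirling number of the second kind `S(k, b)`: the number of partitions
of `Fin k` into exactly `b` parts. -/
noncomputable def stirling2 (k b : ℕ) : ℕ :=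
  Nat.card {P : Finpartition (Finset.univ : Finset (Fin k)) // P.parts.card = b}

open Nat Equiv

theorem Nat.doubleFactorial_mul_two_pow_mul_factorial (ℓ : ℕ) :
    (2 * ℓ - 1)‼ * (2 ^ ℓ * ℓ !) = (2 * ℓ)! := by
  cases ℓ with
  | zero => rfl
  | succ m =>
    rw [← doubleFactorial_two_mul, show 2 * (m + 1) = 2 * m + 1 + 1 by ring,
      factorial_eq_mul_doubleFactorial, Nat.add_sub_cancel, mul_comm]

namespace Equiv.Perm

variable {α : Type*} [Fintype α] [DecidableEq α]

theorem cycleType_eq_replicate_two_iff {σ : Perm α} {ℓ : ℕ} :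
    σ.cycleType = Multiset.replicate ℓ 2 ↔ σ ^ 2 = 1 ∧ #σ.support = 2 * ℓ := by
  have : Fact (Nat.Prime 2) := ⟨Nat.prime_two⟩
  constructor
  · intro h
    refine ⟨pow_prime_eq_one_iff.2 fun c hc => ?_, ?_⟩
    · rw [h] at hc; exact Multiset.eq_of_mem_replicate hc
    · rw [← sum_cycleType, h, Multiset.sum_replicate, smul_eq_mul, mul_comm]
  · rintro ⟨hσ, hsupp⟩
    have h := cycleType_of_pow_prime_eq_one hσ
    rw [← sum_cycleType, h, Multiset.sum_replicate, smul_eq_mul, mul_comm] at hsupp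
    rw [h, Nat.eq_of_mul_eq_mul_left two_pos hsupp]

theorem card_involutions_with_card_support (ℓ : ℕ) :
    #{σ : Perm α | σ ^ 2 = 1 ∧ #σ.support = 2 * ℓ} =
      (Fintype.card α).choose (2 * ℓ) * (2 * ℓ - 1)‼ := by
  have key := card_of_cycleType_mul_eq α (Multiset.replicate ℓ 2)
  have hsum : (Multiset.replicate ℓ 2).sum = 2 * ℓ := by
    rw [Multiset.sum_replicate, smul_eq_mul, mul_comm]
  have hcount : ∏ n ∈ (Multiset.replicate ℓ 2).toFinset,
      (Multiset.count n (Multiset.replicate ℓ 2))! = ℓ ! := by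
    rcases Nat.eq_zero_or_pos ℓ with rfl | hℓ
    · rfl
    · rw [Multiset.toFinset_replicate, if_neg hℓ.ne', prod_singleton,
        Multiset.count_replicate_self]
  simp only [cycleType_eq_replicate_two_iff, hsum, Multiset.prod_replicate, hcount] at key
  have hpos : 0 < (Fintype.card α - 2 * ℓ)! * 2 ^ ℓ * ℓ ! := by positivity
  by_cases hle : 2 * ℓ ≤ Fintype.card α
  · rw [if_pos ⟨hle, fun _ h => (Multiset.eq_of_mem_replicate h).ge⟩] at key
    refine Nat.eq_of_mul_eq_mul_right hpos (key.trans ?_)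
    rw [← choose_mul_factorial_mul_factorial hle,
      ← doubleFactorial_mul_two_pow_mul_factorial]
    ring
  · rw [if_neg fun h => hle h.1] at key
    rw [choose_eq_zero_of_lt (not_le.1 hle), zero_mul]
    exact (Nat.mul_eq_zero.1 key).resolve_right hpos.ne'

end Equiv.Perm

theorem card_sigma_subset_involutions {β : Type*} [Fintype β] [DecidableEq β] (s : Finset β)
    (r ℓ : ℕ) :
    Nat.card ((Q : {Q : Finset β // Q ⊆ s ∧ #Q = r}) ×
        {σ : Perm Q.1 // σ ^ 2 = 1 ∧ #(univ.filter fun A => σ A ≠ A) = 2 * ℓ}) =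
      (#s).choose r * (r.choose (2 * ℓ) * (2 * ℓ - 1)‼) := by
  have hsubsets : Fintype.card {Q : Finset β // Q ⊆ s ∧ #Q = r} = (#s).choose r := by
    rw [← card_powersetCard, ← Fintype.card_coe]
    exact Fintype.card_congr (Equiv.subtypeEquivRight fun Q => mem_powersetCard.symm)
  rw [Nat.card_sigma, Fintype.sum_congr _ (fun _ => r.choose (2 * ℓ) * (2 * ℓ - 1)‼),
    sum_const, Finset.card_univ, hsubsets, smul_eq_mul]
  rintro ⟨Q, -, rfl⟩
  rw [Nat.card_eq_fintype_card, Fintype.card_subtype]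
  exact (Perm.card_involutions_with_card_support ℓ).trans (by rw [Fintype.card_coe])

theorem sum_finpartition_eq_sum_stirling2 {M : Type*} [AddCommMonoid M] (k : ℕ) (f : ℕ → M) :
    ∑ P : Finpartition (univ : Finset (Fin k)), f #P.parts =
      ∑ b ∈ range (k + 1), stirling2 k b • f b := by
  rw [← sum_fiberwise_of_maps_to (g := fun P => #P.parts) (t := range (k + 1))]
  · refine sum_congr rfl fun b _ => ?_
    rw [sum_congr rfl fun P hP => congrArg f (mem_filter.1 hP).2, sum_const, stirling2,
      Nat.card_eq_fintype_card, Fintype.card_subtype]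
  · intro P _
    exact mem_range_succ_iff.2 (P.card_parts_le_card.trans_eq (card_fin k))

theorem symmetric_partition_diagram_count_general (k r ℓ : ℕ) :
    Nat.card
      ((P : Finpartition (Finset.univ : Finset (Fin k))) ×
        (Q : {Q : Finset (Finset (Fin k)) // Q ⊆ P.parts ∧ Q.card = r}) ×
        {σ : Equiv.Perm {A // A ∈ Q.1} //
          σ ^ 2 = 1 ∧ (Finset.univ.filter fun A => σ A ≠ A).card = 2 * ℓ})
    = ∑ b ∈ Finset.Icc r k,
        stirling2 k b * Nat.choose b r * Nat.choose r (2 * ℓ) *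
          Nat.doubleFactorial (2 * ℓ - 1) := by
  rw [Nat.card_sigma]
  simp only [card_sigma_subset_involutions]
  rw [sum_finpartition_eq_sum_stirling2 k
      fun b => b.choose r * (r.choose (2 * ℓ) * (2 * ℓ - 1)‼), ← sum_subset (s₁ := Icc r k)]
  · exact sum_congr rfl fun b _ => by rw [smul_eq_mul]; ring
  · exact fun b hb => mem_range_succ_iff.2 (mem_Icc.1 hb).2
  · intro b hb hbr
    have hlt : b < r := by
      simp only [mem_range, mem_Icc, not_and_or, not_le] at hb hbr
      omega
    rw [choose_eq_zero_of_lt hlt, zero_mul, smul_zero]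

/-- The number of triples `(P, Q, σ)`, where `P` is a partition of `Fin k`,
`Q` is an `r`-element subset of the parts of `P`, and `σ` is an involution of
`Q` with exactly `ℓ` two-element orbits (equivalently, for an involution,
exactly `2ℓ` non-fixed elements), equals
`Σ_{b=r}^{k} S(k,b)·C(b,r)·C(r,2ℓ)·(2ℓ−1)!!`.  These triples are in bijection
with the vertically symmetric partition-algebra diagrams on `k` vertices of
rank `r` with `r − 2ℓ` fixed blocks. -/
theorem symmetric_partition_diagram_count (k r ℓ : ℕ)
    (hℓ : 2 * ℓ ≤ r) (hr : r ≤ k) :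
    Nat.card
      ((P : Finpartition (Finset.univ : Finset (Fin k))) ×
        (Q : {Q : Finset (Finset (Fin k)) // Q ⊆ P.parts ∧ Q.card = r}) ×
        {σ : Equiv.Perm {A // A ∈ Q.1} //
          σ ^ 2 = 1 ∧ (Finset.univ.filter fun A => σ A ≠ A).card = 2 * ℓ})
    = ∑ b ∈ Finset.Icc r k,
        stirling2 k b * Nat.choose b r * Nat.choose r (2 * ℓ) *
          Nat.doubleFactorial (2 * ℓ - 1) :=
  symmetric_partition_diagram_count_general k r ℓ
end
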